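/- If $X$ and $Y$ are independent nonnegative subexponential random variables with $\overline{F_Y}(t) \sim c\,\overline{F_X}(t)$ for some $c > 0$, then $X + Y$ is subexponential and $\overline{F_{X+Y}}(t) \sim (1+c)\,\overline{F_X}(t)$. -/

import Mathlib

open MeasureTheory ProbabilityTheory Filter

/-- The tail of the `n`-fold convolution of `ν`:
`P(X₁ + ⋯ + Xₙ > t)` for `X₁, …, Xₙ` i.i.d. with law `ν`. -/
noncomputable def convTail (ν : Measure ℝ) (n : ℕ) (t : ℝ) : ℝ :=
  ((Measure.pi fun _ : Fin n => ν) {x | t < ∑ i, x i}).toReal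

/-- A law `ν` on `ℝ` is subexponential if `P(X₁+⋯+Xₙ > t) / P(X₁ > t) → n` for all `n ≥ 1`. -/
def Subexponential (ν : Measure ℝ) : Prop :=
  ∀ n : ℕ, 1 ≤ n →
    Tendsto (fun t => convTail ν n t / (ν (Set.Ioi t)).toReal) atTop (nhds (n : ℝ))

/-!
Write `F̄(t) = P(X > t)`. For laws `σ, τ` on `[0, ∞)`,
`(σ ∗ τ)‾(t) = σ̄(t) + ∫_{[0,t]} τ̄(t - x) dσ(x)`. For `n = 2`, subexponentiality of `F` says
`∫_{[0,t]} F̄(t - x) dF(x) ~ F̄(t)`, which forces `F` to be long-tailed. Long-tailedness lets one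
replace `F̄` by a tail-equivalent `K̄ ~ d F̄` in `∫_{[0,t]} F̄(t - x) dG(x) ~ F̄(t)` whenever
`Ḡ ~ c F̄`: the integrands compare on `x ≤ t - A`, and `(t - A, t]` has `G`-mass
`Ḡ(t - A) - Ḡ(t) = o(F̄(t))`. With `G = F` this gives `(F ∗ G)‾ ~ (1 + c) F̄`, hence
`∫_{[0,t]} F̄(t - x) dG(x) ~ F̄(t)`, and by induction the `n`-th convolution power of `F ∗ G`
has tail `~ n (1 + c) F̄`.
-/

open Set Topology

noncomputable def survival (σ : Measure ℝ) (t : ℝ) : ℝ := σ.real (Ioi t)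

section Survival

variable (σ : Measure ℝ)

lemma survival_nonneg (t : ℝ) : 0 ≤ survival σ t := measureReal_nonneg

lemma survival_antitone [IsFiniteMeasure σ] : Antitone (survival σ) := fun _ _ hst =>
  measureReal_mono (Ioi_subset_Ioi hst)

lemma measurable_survival [IsFiniteMeasure σ] : Measurable (survival σ) :=
  (survival_antitone σ).measurable

lemma measureReal_Ioc_eq_survival_sub [IsFiniteMeasure σ] {a b : ℝ} (hab : a ≤ b) :
    σ.real (Ioc a b) = survival σ a - survival σ b := by
  rw [survival, survival, ← measureReal_sdiff (Ioi_subset_Ioi hab) measurableSet_Ioi,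
    Ioi_sdiff_Ioi]

lemma Icc_zero_ae_eq_Iic (hσ : σ (Iio 0) = 0) (t : ℝ) : Icc 0 t =ᵐ[σ] Iic t := by
  refine (Icc_subset_Iic_self.eventuallyLE).antisymm (ae_le_set.2 (measure_mono_null ?_ hσ))
  intro x hx
  simp only [Set.mem_sdiff, mem_Iic, mem_Icc, not_and] at hx
  exact not_le.1 fun h => hx.2 h hx.1

variable [IsProbabilityMeasure σ]

lemma survival_eq_one_sub_cdf (t : ℝ) : survival σ t = 1 - cdf σ t := by
  rw [cdf_eq_real, survival, ← compl_Iic, probReal_compl_eq_one_sub measurableSet_Iic]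

lemma survival_le_one (t : ℝ) : survival σ t ≤ 1 := by
  linarith [survival_eq_one_sub_cdf σ t, cdf_nonneg σ t]

lemma tendsto_survival_atTop : Tendsto (survival σ) atTop (𝓝 0) := by
  simpa [funext (survival_eq_one_sub_cdf σ)] using (tendsto_cdf_atTop σ).const_sub 1

lemma measureReal_Icc_zero (hσ : σ (Iio 0) = 0) (t : ℝ) :
    σ.real (Icc 0 t) = 1 - survival σ t := by
  rw [survival_eq_one_sub_cdf, cdf_eq_real, sub_sub_cancel,
    measureReal_congr (Icc_zero_ae_eq_Iic σ hσ t)]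

lemma survival_of_neg (hσ : σ (Iio 0) = 0) {t : ℝ} (ht : t < 0) : survival σ t = 1 := by
  rw [survival_eq_one_sub_cdf, cdf_eq_real, Measure.real,
    measure_mono_null (Iic_subset_Iio.2 ht) hσ, ENNReal.toReal_zero, sub_zero]

end Survival

section Convolution

variable {σ τ : Measure ℝ}

lemma conv_Iio_zero [SFinite σ] [SFinite τ] (hσ : σ (Iio 0) = 0) (hτ : τ (Iio 0) = 0) :
    (σ ∗ τ) (Iio 0) = 0 := by
  rw [Measure.conv, Measure.map_apply measurable_add measurableSet_Iio]
  refine measure_mono_null (t := Iio 0 ×ˢ univ ∪ univ ×ˢ Iio 0) ?_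
    (measure_union_null (by simp [Measure.prod_prod, hσ]) (by simp [Measure.prod_prod, hτ]))
  intro p hp
  by_contra h
  simp only [mem_preimage, mem_Iio, mem_union, mem_prod, mem_univ, and_true, true_and,
    not_or, not_lt] at hp h
  linarith

lemma measurable_survival_sub (τ : Measure ℝ) [IsFiniteMeasure τ] (t : ℝ) :
    Measurable fun x => survival τ (t - x) :=
  (measurable_survival τ).comp (measurable_const.sub measurable_id)

lemma integrable_survival_sub [IsFiniteMeasure σ] [IsProbabilityMeasure τ] (t : ℝ) :
    Integrable (fun x => survival τ (t - x)) σ :=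
  (integrable_const 1).mono' (measurable_survival_sub τ t).aestronglyMeasurable
    (ae_of_all _ fun x => by
      rw [Real.norm_of_nonneg (survival_nonneg τ _)]; exact survival_le_one τ _)

lemma survival_conv_eq_integral [SFinite σ] [IsFiniteMeasure τ] (t : ℝ) :
    survival (σ ∗ τ) t = ∫ x, survival τ (t - x) ∂σ := by
  have hs : MeasurableSet ((fun p : ℝ × ℝ => p.1 + p.2) ⁻¹' Ioi t) :=
    measurable_add measurableSet_Ioi
  have hsection (x : ℝ) :
      Prod.mk x ⁻¹' ((fun p : ℝ × ℝ => p.1 + p.2) ⁻¹' Ioi t) = Ioi (t - x) := by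
    ext y
    simp [sub_lt_iff_lt_add']
  rw [survival, Measure.real, Measure.conv, Measure.map_apply measurable_add measurableSet_Ioi,
    Measure.prod_apply hs, ← integral_toReal]
  · simp only [hsection]; rfl
  · exact (measurable_measure_prodMk_left hs).aemeasurable
  · exact ae_of_all _ fun x => measure_lt_top τ _

/-- For independent `X ~ σ`, `Y ~ τ` with values in `[0, ∞)`, this is `P(X ≤ t < X + Y)`. -/
noncomputable def survivalIntegral (σ τ : Measure ℝ) (t : ℝ) : ℝ :=
  ∫ x in Icc 0 t, survival τ (t - x) ∂σ

lemma survivalIntegral_nonneg (σ τ : Measure ℝ) (t : ℝ) : 0 ≤ survivalIntegral σ τ t :=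
  setIntegral_nonneg measurableSet_Icc fun _ _ => survival_nonneg τ _

lemma survival_conv [IsProbabilityMeasure σ] [IsProbabilityMeasure τ]
    (hσ : σ (Iio 0) = 0) (hτ : τ (Iio 0) = 0) (t : ℝ) :
    survival (σ ∗ τ) t = survival σ t + survivalIntegral σ τ t := by
  rw [survival_conv_eq_integral, ← integral_add_compl measurableSet_Ioi
    (integrable_survival_sub t), compl_Ioi, survivalIntegral,
    setIntegral_congr_set (Icc_zero_ae_eq_Iic σ hσ t)]
  congr 1
  rw [setIntegral_congr_fun measurableSet_Ioi fun x hx =>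
    survival_of_neg τ hτ (sub_neg.2 (mem_Ioi.1 hx)), setIntegral_const, smul_eq_mul, mul_one]
  rfl

end Convolution

section SurvivalIntegral

variable {σ τ τ' : Measure ℝ} [IsFiniteMeasure σ] [IsProbabilityMeasure τ]

lemma survivalIntegral_eq_add {a t : ℝ} (ha : 0 ≤ a) (hat : a ≤ t) :
    survivalIntegral σ τ t =
      (∫ x in Icc 0 a, survival τ (t - x) ∂σ) + ∫ x in Ioc a t, survival τ (t - x) ∂σ := by
  rw [survivalIntegral, ← Icc_union_Ioc_eq_Icc ha hat]
  exact setIntegral_union (Set.disjoint_left.2 fun x hx₁ hx₂ => not_lt.2 hx₁.2 hx₂.1)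
    measurableSet_Ioc (integrable_survival_sub t).integrableOn
    (integrable_survival_sub t).integrableOn

lemma setIntegral_Ioc_survival_sub_le {a t : ℝ} (hat : a ≤ t) :
    ∫ x in Ioc a t, survival τ (t - x) ∂σ ≤ survival σ a - survival σ t := by
  rw [← measureReal_Ioc_eq_survival_sub σ hat, ← one_mul (σ.real _)]
  refine (Real.le_norm_self _).trans
    (norm_setIntegral_le_of_norm_le_const (measure_lt_top _ _) fun x _ => ?_)
  rw [Real.norm_of_nonneg (survival_nonneg τ _)]
  exact survival_le_one τ _

lemma mul_survivalIntegral_le [IsProbabilityMeasure τ'] {a b A t : ℝ} (ha : 0 ≤ a)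
    (hb : 0 ≤ b) (hA : 0 ≤ A) (hAt : A ≤ t)
    (h : ∀ s, A ≤ s → a * survival τ s ≤ b * survival τ' s) :
    a * survivalIntegral σ τ t ≤
      b * survivalIntegral σ τ' t + a * (survival σ (t - A) - survival σ t) := by
  have hbulk :
      a * ∫ x in Icc 0 (t - A), survival τ (t - x) ∂σ ≤ b * survivalIntegral σ τ' t :=
    calc a * ∫ x in Icc 0 (t - A), survival τ (t - x) ∂σ
        = ∫ x in Icc 0 (t - A), a * survival τ (t - x) ∂σ := (integral_const_mul _ _).symm
      _ ≤ ∫ x in Icc 0 (t - A), b * survival τ' (t - x) ∂σ :=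
          setIntegral_mono_on ((integrable_survival_sub t).integrableOn.const_mul _)
            ((integrable_survival_sub t).integrableOn.const_mul _) measurableSet_Icc
            fun x hx => h _ (by linarith [hx.2])
      _ = b * ∫ x in Icc 0 (t - A), survival τ' (t - x) ∂σ := integral_const_mul _ _
      _ ≤ b * survivalIntegral σ τ' t := by
          refine mul_le_mul_of_nonneg_left (setIntegral_mono_set
            (integrable_survival_sub t).integrableOn
            (ae_of_all _ fun _ => survival_nonneg τ' _) ?_) hb
          exact (Icc_subset_Icc_right (by linarith)).eventuallyLE
  have hstrip := mul_le_mul_of_nonneg_left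
    (setIntegral_Ioc_survival_sub_le (σ := σ) (τ := τ) (sub_le_self t hA)) ha
  rw [survivalIntegral_eq_add (sub_nonneg.2 hAt) (sub_le_self t hA), mul_add]
  linarith

end SurvivalIntegral

lemma le_survivalIntegral {σ τ : Measure ℝ} [IsProbabilityMeasure σ]
    [IsProbabilityMeasure τ] (hσ : σ (Iio 0) = 0) {a t : ℝ} (ha : 0 ≤ a) (hat : a ≤ t) :
    survival τ t * (1 - survival σ a) + survival τ (t - a) * (survival σ a - survival σ t) ≤
      survivalIntegral σ τ t := by
  rw [survivalIntegral_eq_add ha hat, ← measureReal_Icc_zero σ hσ,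
    ← measureReal_Ioc_eq_survival_sub σ hat]
  gcongr
  · exact setIntegral_ge_of_const_le_real measurableSet_Icc (measure_ne_top _ _)
      (fun x hx => survival_antitone τ (by linarith [hx.1]))
      (integrable_survival_sub t).integrableOn
  · exact setIntegral_ge_of_const_le_real measurableSet_Ioc (measure_ne_top _ _)
      (fun x hx => survival_antitone τ (by linarith [hx.1]))
      (integrable_survival_sub t).integrableOn

section ConvPow

noncomputable def convPow (ν : Measure ℝ) (n : ℕ) : Measure ℝ :=
  (Measure.pi fun _ : Fin n => ν).map fun x => ∑ i, x i

variable (ν : Measure ℝ)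

lemma convTail_eq_survival_convPow (n : ℕ) (t : ℝ) :
    convTail ν n t = survival (convPow ν n) t := by
  rw [convTail, survival, Measure.real, convPow,
    Measure.map_apply (by fun_prop) measurableSet_Ioi]
  rfl

instance [IsProbabilityMeasure ν] (n : ℕ) : IsProbabilityMeasure (convPow ν n) :=
  Measure.isProbabilityMeasure_map (by fun_prop)

lemma convPow_zero : convPow ν 0 = Measure.dirac 0 := by
  rw [convPow, Measure.pi_of_empty, Measure.map_dirac' (by fun_prop)]
  simp

lemma convPow_succ [SigmaFinite ν] (n : ℕ) : convPow ν (n + 1) = ν ∗ convPow ν n := by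
  have hsplit := measurePreserving_piFinSuccAbove (fun _ : Fin (n + 1) => ν) 0
  have hsum := (MeasurePreserving.id ν).prod
    ((show Measurable fun x : Fin n → ℝ => ∑ i, x i by fun_prop).measurePreserving
      (Measure.pi fun _ : Fin n => ν))
  have hfactor : (fun x : Fin (n + 1) → ℝ => ∑ i, x i) = (fun p : ℝ × ℝ => p.1 + p.2) ∘
      Prod.map id (fun x : Fin n → ℝ => ∑ i, x i) ∘
      MeasurableEquiv.piFinSuccAbove (fun _ => ℝ) 0 := by
    funext x
    simp [Fin.sum_univ_succ, Fin.tail]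
  rw [convPow, hfactor, ← Measure.map_map measurable_add (by fun_prop),
    ← Measure.map_map (by fun_prop) (MeasurableEquiv.measurable _), hsplit.map_eq, hsum.map_eq]
  rfl

lemma convPow_Iio_zero [IsProbabilityMeasure ν] (hν : ν (Iio 0) = 0) (n : ℕ) :
    convPow ν n (Iio 0) = 0 := by
  induction n with
  | zero => simp [convPow_zero]
  | succ n ih => rw [convPow_succ]; exact conv_Iio_zero hν ih

end ConvPow

lemma subexponential_iff (F : Measure ℝ) : Subexponential F ↔ ∀ n : ℕ, 1 ≤ n →
    Tendsto (fun t => survival (convPow F n) t / survival F t) atTop (𝓝 (n : ℝ)) := by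
  simp only [Subexponential, ← convTail_eq_survival_convPow]
  rfl

def IsLongTailed (F : Measure ℝ) : Prop :=
  ∀ a, 0 ≤ a → Tendsto (fun t => survival F (t - a) / survival F t) atTop (𝓝 1)

namespace Subexponential

variable {F : Measure ℝ}

lemma survival_pos [IsFiniteMeasure F] (hF : Subexponential F) (t : ℝ) : 0 < survival F t := by
  refine (survival_nonneg F t).lt_of_ne' fun h0 => ?_
  have hvanish : ∀ᶠ s in atTop, convTail F 1 s / (F (Ioi s)).toReal = 0 := by
    filter_upwards [eventually_ge_atTop t] with s hs
    have : survival F s = 0 := le_antisymm (h0 ▸ survival_antitone F hs) (survival_nonneg F s)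
    rw [show (F (Ioi s)).toReal = survival F s from rfl, this, div_zero]
  have h1 : Tendsto (fun _ : ℝ => (0 : ℝ)) atTop (𝓝 1) := by
    simpa using (hF 1 le_rfl).congr' hvanish
  exact one_ne_zero (tendsto_nhds_unique h1 tendsto_const_nhds)

variable [IsProbabilityMeasure F]

lemma tendsto_survivalIntegral_self_div (hF : Subexponential F) (hF0 : F (Iio 0) = 0) :
    Tendsto (fun t => survivalIntegral F F t / survival F t) atTop (𝓝 1) := by
  have h2 := ((subexponential_iff F).1 hF 2 one_le_two).sub_const 1
  norm_num at h2
  refine h2.congr fun t => ?_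
  rw [convPow_succ, convPow_succ, convPow_zero, Measure.conv_dirac_zero, survival_conv hF0 hF0,
    add_div, div_self (hF.survival_pos t).ne', add_sub_cancel_left]

lemma isLongTailed (hF : Subexponential F) (hF0 : F (Iio 0) = 0) : IsLongTailed F := by
  intro a ha
  set m := survival F a
  have hm : 0 < m := hF.survival_pos a
  have hpos := hF.survival_pos
  have hlower (t : ℝ) : 1 ≤ survival F (t - a) / survival F t :=
    (one_le_div (hpos t)).2 (survival_antitone F (sub_le_self t ha))
  have hupper : ∀ᶠ t in atTop, survival F (t - a) / survival F t ≤
      (survivalIntegral F F t / survival F t - (1 - m)) / (m - survival F t) := by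
    filter_upwards [eventually_ge_atTop a, (tendsto_survival_atTop F).eventually_lt_const hm]
      with t hat htm
    have := le_survivalIntegral hF0 ha hat (τ := F)
    rw [le_div_iff₀ (sub_pos.2 htm), le_sub_iff_add_le, le_div_iff₀ (hpos t)]
    calc _ = survival F t * (1 - m) + survival F (t - a) * (m - survival F t) := by
          rw [add_mul, mul_right_comm, div_mul_cancel₀ _ (hpos t).ne']; ring
      _ ≤ _ := this
  have hlim : Tendsto (fun t => (survivalIntegral F F t / survival F t - (1 - m)) /
      (m - survival F t)) atTop (𝓝 1) := by
    have := Filter.Tendsto.div ((hF.tendsto_survivalIntegral_self_div hF0).sub_const (1 - m))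
      ((tendsto_survival_atTop F).const_sub m) (by simpa using hm.ne')
    simpa [hm.ne', Pi.div_def] using this
  exact tendsto_of_tendsto_of_tendsto_of_le_of_le' tendsto_const_nhds hlim
    (Eventually.of_forall hlower) hupper

end Subexponential

section TailEquivalence

variable {F G K : Measure ℝ}

lemma IsLongTailed.tendsto_survival_sub_shift_div (hF : IsLongTailed F)
    (hpos : ∀ t, 0 < survival F t) {c : ℝ}
    (hGF : Tendsto (fun t => survival G t / survival F t) atTop (𝓝 c)) {A : ℝ} (hA : 0 ≤ A) :
    Tendsto (fun t => (survival G (t - A) - survival G t) / survival F t) atTop (𝓝 0) := by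
  have hshift : Tendsto (fun t => survival G (t - A) / survival F (t - A)) atTop (𝓝 c) :=
    hGF.comp (tendsto_atTop_add_const_right _ (-A) tendsto_id)
  have := (hshift.mul (hF A hA)).sub hGF
  rw [mul_one, sub_self] at this
  refine this.congr fun t => ?_
  rw [sub_div, div_mul_div_cancel₀ (hpos _).ne']

variable [IsProbabilityMeasure F] [IsProbabilityMeasure G] [IsProbabilityMeasure K]

lemma eventually_survivalIntegral_div_lt (hpos : ∀ t, 0 < survival F t) (hF : IsLongTailed F)
    {c d b : ℝ} (hGF : Tendsto (fun t => survival G t / survival F t) atTop (𝓝 c))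
    (hW : Tendsto (fun t => survivalIntegral G F t / survival F t) atTop (𝓝 1))
    (hKF : Tendsto (fun t => survival K t / survival F t) atTop (𝓝 d)) (hdb : d < b) :
    ∀ᶠ t in atTop, survivalIntegral G K t / survival F t < b := by
  have hd : 0 ≤ d :=
    ge_of_tendsto' hKF fun t => div_nonneg (survival_nonneg K t) (survival_nonneg F t)
  obtain ⟨d', hdd', hd'b⟩ := exists_between hdb
  obtain ⟨A, hA⟩ := eventually_atTop.1 (hKF.eventually_lt_const hdd')
  have hK (s : ℝ) (hs : max A 0 ≤ s) : 1 * survival K s ≤ d' * survival F s := by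
    rw [one_mul, ← div_le_iff₀ (hpos s)]
    exact (hA s (le_of_max_le_left hs)).le
  have hlim : Tendsto (fun t => d' * (survivalIntegral G F t / survival F t) +
      (survival G (t - max A 0) - survival G t) / survival F t) atTop (𝓝 d') := by
    simpa using (hW.const_mul d').add
      (hF.tendsto_survival_sub_shift_div hpos hGF (le_max_right A 0))
  filter_upwards [hlim.eventually_lt_const hd'b, eventually_ge_atTop (max A 0)] with t hlt ht
  refine lt_of_le_of_lt ?_ hlt
  have := mul_survivalIntegral_le (σ := G) zero_le_one (hd.trans hdd'.le) (le_max_right A 0) ht hK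
  calc survivalIntegral G K t / survival F t
      ≤ (d' * survivalIntegral G F t + (survival G (t - max A 0) - survival G t)) /
          survival F t := div_le_div_of_nonneg_right (by linarith) (hpos t).le
    _ = _ := by ring

lemma eventually_lt_survivalIntegral_div (hpos : ∀ t, 0 < survival F t) (hF : IsLongTailed F)
    {c d a : ℝ} (hGF : Tendsto (fun t => survival G t / survival F t) atTop (𝓝 c))
    (hW : Tendsto (fun t => survivalIntegral G F t / survival F t) atTop (𝓝 1))
    (hKF : Tendsto (fun t => survival K t / survival F t) atTop (𝓝 d)) (had : a < d) :
    ∀ᶠ t in atTop, a < survivalIntegral G K t / survival F t := by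
  rcases lt_or_ge a 0 with ha | ha
  · exact Eventually.of_forall fun t =>
      ha.trans_le (div_nonneg (survivalIntegral_nonneg G K t) (hpos t).le)
  obtain ⟨d', had', hd'd⟩ := exists_between had
  obtain ⟨A, hA⟩ := eventually_atTop.1 (hKF.eventually_const_lt hd'd)
  have hK (s : ℝ) (hs : max A 0 ≤ s) : d' * survival F s ≤ 1 * survival K s := by
    rw [one_mul, ← le_div_iff₀ (hpos s)]
    exact (hA s (le_of_max_le_left hs)).le
  have hlim : Tendsto (fun t => d' * (survivalIntegral G F t / survival F t) -
      d' * ((survival G (t - max A 0) - survival G t) / survival F t)) atTop (𝓝 d') := by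
    simpa using (hW.const_mul d').sub
      ((hF.tendsto_survival_sub_shift_div hpos hGF (le_max_right A 0)).const_mul d')
  filter_upwards [hlim.eventually_const_lt had', eventually_ge_atTop (max A 0)] with t hlt ht
  refine lt_of_lt_of_le hlt ?_
  have := mul_survivalIntegral_le (σ := G) (ha.trans had'.le) zero_le_one (le_max_right A 0) ht hK
  calc _ = (d' * survivalIntegral G F t - d' * (survival G (t - max A 0) - survival G t)) /
          survival F t := by ring
    _ ≤ survivalIntegral G K t / survival F t :=
        div_le_div_of_nonneg_right (by linarith) (hpos t).le

lemma tendsto_survivalIntegral_div (hpos : ∀ t, 0 < survival F t) (hF : IsLongTailed F)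
    {c d : ℝ} (hGF : Tendsto (fun t => survival G t / survival F t) atTop (𝓝 c))
    (hW : Tendsto (fun t => survivalIntegral G F t / survival F t) atTop (𝓝 1))
    (hKF : Tendsto (fun t => survival K t / survival F t) atTop (𝓝 d)) :
    Tendsto (fun t => survivalIntegral G K t / survival F t) atTop (𝓝 d) :=
  tendsto_order.2 ⟨fun _ had => eventually_lt_survivalIntegral_div hpos hF hGF hW hKF had,
    fun _ hdb => eventually_survivalIntegral_div_lt hpos hF hGF hW hKF hdb⟩

lemma tendsto_survival_conv_div (hG0 : G (Iio 0) = 0) (hK0 : K (Iio 0) = 0)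
    (hpos : ∀ t, 0 < survival F t) (hF : IsLongTailed F)
    {c d : ℝ} (hGF : Tendsto (fun t => survival G t / survival F t) atTop (𝓝 c))
    (hW : Tendsto (fun t => survivalIntegral G F t / survival F t) atTop (𝓝 1))
    (hKF : Tendsto (fun t => survival K t / survival F t) atTop (𝓝 d)) :
    Tendsto (fun t => survival (G ∗ K) t / survival F t) atTop (𝓝 (c + d)) :=
  (hGF.add (tendsto_survivalIntegral_div hpos hF hGF hW hKF)).congr fun t => by
    rw [survival_conv hG0 hK0, add_div]

end TailEquivalence

namespace Subexponential

variable {F G : Measure ℝ} [IsProbabilityMeasure F] [IsProbabilityMeasure G] {c : ℝ}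

lemma tendsto_survival_conv_div (hF : Subexponential F) (hF0 : F (Iio 0) = 0)
    {K : Measure ℝ} [IsProbabilityMeasure K] (hK0 : K (Iio 0) = 0)
    (hKF : Tendsto (fun t => survival K t / survival F t) atTop (𝓝 c)) :
    Tendsto (fun t => survival (F ∗ K) t / survival F t) atTop (𝓝 (1 + c)) :=
  _root_.tendsto_survival_conv_div hF0 hK0 hF.survival_pos (hF.isLongTailed hF0)
    (tendsto_const_nhds.congr fun t => (div_self (hF.survival_pos t).ne').symm)
    (hF.tendsto_survivalIntegral_self_div hF0) hKF

lemma tendsto_survivalIntegral_div (hF : Subexponential F) (hF0 : F (Iio 0) = 0)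
    (hG0 : G (Iio 0) = 0) (hGF : Tendsto (fun t => survival G t / survival F t) atTop (𝓝 c)) :
    Tendsto (fun t => survivalIntegral G F t / survival F t) atTop (𝓝 1) := by
  have := (hF.tendsto_survival_conv_div hF0 hG0 hGF).sub hGF
  rw [add_sub_cancel_right] at this
  refine this.congr fun t => ?_
  rw [Measure.conv_comm, survival_conv hG0 hF0, add_div, add_sub_cancel_left]

lemma tendsto_survival_convPow_conv_div (hF : Subexponential F) (hF0 : F (Iio 0) = 0)
    (hG0 : G (Iio 0) = 0) (hGF : Tendsto (fun t => survival G t / survival F t) atTop (𝓝 c))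
    (n : ℕ) :
    Tendsto (fun t => survival (convPow (F ∗ G) n) t / survival F t) atTop (𝓝 (n * (1 + c))) := by
  induction n with
  | zero =>
    refine tendsto_const_nhds.congr' ?_
    filter_upwards [eventually_ge_atTop 0] with t ht
    simp [convPow_zero, survival, measureReal_def, ht.not_gt]
  | succ n ih =>
    have hP0 := convPow_Iio_zero (F ∗ G) (conv_Iio_zero hF0 hG0) n
    have := hF.tendsto_survival_conv_div hF0 (conv_Iio_zero hG0 hP0)
      (_root_.tendsto_survival_conv_div hG0 hP0 hF.survival_pos (hF.isLongTailed hF0) hGF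
        (hF.tendsto_survivalIntegral_div hF0 hG0 hGF) ih)
    rw [convPow_succ, Measure.conv_assoc, Nat.cast_succ, add_one_mul, add_comm _ (1 + c),
      add_assoc]
    exact this

theorem conv (hF : Subexponential F) (hF0 : F (Iio 0) = 0) (hG0 : G (Iio 0) = 0)
    (hGF : Tendsto (fun t => survival G t / survival F t) atTop (𝓝 c)) :
    Subexponential (F ∗ G) := by
  have hc : 0 ≤ c :=
    ge_of_tendsto' hGF fun t => div_nonneg (survival_nonneg G t) (survival_nonneg F t)
  refine (subexponential_iff _).2 fun n _ => ?_
  have := (hF.tendsto_survival_convPow_conv_div hF0 hG0 hGF n).div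
    (hF.tendsto_survival_conv_div hF0 hG0 hGF) (by positivity)
  rw [mul_div_cancel_right₀ _ (by positivity)] at this
  exact this.congr fun t => div_div_div_cancel_right₀ (hF.survival_pos t).ne' _ _

end Subexponential

lemma survival_map {Ω : Type*} [MeasurableSpace Ω] {μ : Measure Ω} {Z : Ω → ℝ}
    (hZ : Measurable Z) (t : ℝ) : survival (μ.map Z) t = (μ {ω | t < Z ω}).toReal := by
  rw [survival, Measure.real, Measure.map_apply hZ measurableSet_Ioi]
  rfl

lemma map_Iio_eq_zero_of_nonneg {Ω : Type*} [MeasurableSpace Ω] {μ : Measure Ω} {Z : Ω → ℝ}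
    (hZ : Measurable Z) (hZ0 : ∀ ω, 0 ≤ Z ω) : μ.map Z (Iio 0) = 0 := by
  rw [Measure.map_apply hZ measurableSet_Iio,
    show Z ⁻¹' Iio 0 = ∅ from eq_empty_of_forall_notMem fun ω h => (hZ0 ω).not_gt h,
    measure_empty]

theorem subexponential_add_tail_equivalent_general
    {Ω : Type*} [MeasurableSpace Ω] (μ : Measure Ω) [IsProbabilityMeasure μ]
    (X Y : Ω → ℝ) (hX : Measurable X) (hY : Measurable Y)
    (hX0 : ∀ ω, 0 ≤ X ω) (hY0 : ∀ ω, 0 ≤ Y ω)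
    (hindep : IndepFun X Y μ)
    (hsubX : Subexponential (μ.map X))
    (c : ℝ)
    (htaileq : Tendsto (fun t => (μ {ω | t < Y ω}).toReal / (μ {ω | t < X ω}).toReal)
      atTop (nhds c)) :
    Subexponential (μ.map fun ω => X ω + Y ω) ∧
    Tendsto (fun t => (μ {ω | t < X ω + Y ω}).toReal / (μ {ω | t < X ω}).toReal)
      atTop (nhds (1 + c)) := by
  have := Measure.isProbabilityMeasure_map (μ := μ) hX.aemeasurable
  have := Measure.isProbabilityMeasure_map (μ := μ) hY.aemeasurable
  have hmap : μ.map (fun ω => X ω + Y ω) = μ.map X ∗ μ.map Y :=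
    hindep.map_add_eq_map_conv_map hX hY
  have hYX : Tendsto (fun t => survival (μ.map Y) t / survival (μ.map X) t) atTop (𝓝 c) := by
    simpa only [survival_map hX, survival_map hY] using htaileq
  have hX0' := map_Iio_eq_zero_of_nonneg (μ := μ) hX hX0
  have hY0' := map_Iio_eq_zero_of_nonneg (μ := μ) hY hY0
  refine ⟨hmap ▸ hsubX.conv hX0' hY0' hYX, ?_⟩
  simpa only [← hmap, survival_map hX, survival_map (Z := fun ω => X ω + Y ω) (hX.add hY)] using
    hsubX.tendsto_survival_conv_div hX0' hY0' hYX

theorem subexponential_add_tail_equivalent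
    {Ω : Type*} [MeasurableSpace Ω] (μ : Measure Ω) [IsProbabilityMeasure μ]
    (X Y : Ω → ℝ) (hX : Measurable X) (hY : Measurable Y)
    (hX0 : ∀ ω, 0 ≤ X ω) (hY0 : ∀ ω, 0 ≤ Y ω)
    (hindep : IndepFun X Y μ)
    (hsubX : Subexponential (μ.map X)) (hsubY : Subexponential (μ.map Y))
    (c : ℝ) (hc : 0 < c)
    (htaileq : Tendsto (fun t => (μ {ω | t < Y ω}).toReal / (μ {ω | t < X ω}).toReal)
      atTop (nhds c)) :
    Subexponential (μ.map fun ω => X ω + Y ω) ∧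
    Tendsto (fun t => (μ {ω | t < X ω + Y ω}).toReal / (μ {ω | t < X ω}).toReal)
      atTop (nhds (1 + c)) :=
  subexponential_add_tail_equivalent_general μ X Y hX hY hX0 hY0 hindep hsubX c htaileq
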